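/- arXiv:1912.10735 — 2 statements merged into one kernel-verified Lean document; each statement's English description precedes it below -/
import Mathlib

section
/- Let G(x,y) be a polynomial (or analytic function) in two variables, m ≥ 1, and suppose there exist c_0, …, c_m ∈ ℝ with ȳ(x) = c_0 + c_1 x + … + (c_m/m!) x^m satisfying G(x, ȳ(x)) = O(x^{2m+1}) and ∂_y G(x, ȳ(x)) = x^m · s(x) with s(0) ≠ 0. Then there exists a formal power series solution y(x) of G(x, y(x)) = 0 with y(x) − ȳ(x) = O(x^{m+1}). -/
open Polynomial IsLocalRing Function List

/-- Newton's method / Hensel's lemma for adically complete rings, without the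
monicity assumption (the standard mathlib proof never uses monicity). -/
theorem newton_root_of_isAdicComplete {R : Type*} [CommRing R] (I : Ideal R)
    [IsAdicComplete I R] (f : R[X]) (a₀ : R) (h₁ : f.eval a₀ ∈ I)
    (h₂ : IsUnit (Ideal.Quotient.mk I (Polynomial.derivative f |>.eval a₀))) :
    ∃ a : R, f.IsRoot a ∧ a - a₀ ∈ I := by
  classical
  let f' := derivative f
  let c : ℕ → R := fun n => Nat.recOn n a₀ fun _ b => b - f.eval b * Ring.inverse (f'.eval b)
  have hc : ∀ n, c (n + 1) = c n - f.eval (c n) * Ring.inverse (f'.eval (c n)) := by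
    intro n
    simp only [c, Nat.rec_add_one]
  have hc_mod : ∀ n, c n ≡ a₀ [SMOD I] := by
    intro n
    induction' n with n ih
    · rfl
    rw [hc, sub_eq_add_neg, ← add_zero a₀]
    refine ih.add ?_
    rw [SModEq.zero, Ideal.neg_mem_iff]
    refine I.mul_mem_right _ ?_
    rw [← SModEq.zero] at h₁ ⊢
    exact (ih.eval f).trans h₁
  have hf'c : ∀ n, IsUnit (f'.eval (c n)) := by
    intro n
    haveI := isLocalHom_of_le_jacobson_bot I (IsAdicComplete.le_jacobson_bot I)
    apply IsUnit.of_map (Ideal.Quotient.mk I)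
    convert h₂ using 1
    exact SModEq.def.mp ((hc_mod n).eval _)
  have hfcI : ∀ n, f.eval (c n) ∈ I ^ (n + 1) := by
    intro n
    induction' n with n ih
    · rw [zero_add, pow_one]
      exact h₁
    rw [← taylor_eval_sub (c n), hc, sub_eq_add_neg, sub_eq_add_neg,
      add_neg_cancel_comm]
    rw [eval_eq_sum, sum_over_range' _ _ _ (lt_add_of_pos_right _ zero_lt_two), ←
      Finset.sum_range_add_sum_Ico _ (Nat.le_add_left _ _)]
    swap
    · intro i
      rw [zero_mul]
    refine Ideal.add_mem _ ?_ ?_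
    · erw [Finset.sum_range_succ]
      rw [Finset.range_one, Finset.sum_singleton,
        taylor_coeff_zero, taylor_coeff_one, pow_zero, pow_one, mul_one, mul_neg,
        mul_left_comm, Ring.mul_inverse_cancel _ (hf'c n), mul_one, add_neg_cancel]
      exact Ideal.zero_mem _
    · refine Submodule.sum_mem _ ?_
      simp only [Finset.mem_Ico]
      rintro i ⟨h2i, _⟩
      have aux : n + 2 ≤ i * (n + 1) := by trans 2 * (n + 1) <;> nlinarith only [h2i]
      refine Ideal.mul_mem_left _ _ (Ideal.pow_le_pow_right aux ?_)
      rw [pow_mul']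
      exact Ideal.pow_mem_pow ((Ideal.neg_mem_iff _).2 <| Ideal.mul_mem_right _ _ ih) _
  have aux : ∀ m n, m ≤ n → c m ≡ c n [SMOD (I ^ m • ⊤ : Ideal R)] := by
    intro m n hmn
    rw [← Ideal.one_eq_top, Ideal.smul_eq_mul, mul_one]
    obtain ⟨k, rfl⟩ := Nat.exists_eq_add_of_le hmn
    clear hmn
    induction' k with k ih
    · rfl
    rw [← add_assoc, hc, ← add_zero (c m), sub_eq_add_neg]
    refine ih.add ?_
    symm
    rw [SModEq.zero, Ideal.neg_mem_iff]
    refine Ideal.mul_mem_right _ _ (Ideal.pow_le_pow_right ?_ (hfcI _))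
    rw [add_assoc]
    exact le_self_add
  obtain ⟨a, ha⟩ := IsPrecomplete.prec' c (aux _ _)
  refine ⟨a, ?_, ?_⟩
  · show f.IsRoot a
    suffices ∀ n, f.eval a ≡ 0 [SMOD (I ^ n • ⊤ : Ideal R)] by exact IsHausdorff.haus' _ this
    intro n
    specialize ha n
    rw [← Ideal.one_eq_top, Ideal.smul_eq_mul, mul_one] at ha ⊢
    refine (ha.symm.eval f).trans ?_
    rw [SModEq.zero]
    exact Ideal.pow_le_pow_right le_self_add (hfcI _)
  · show a - a₀ ∈ I
    specialize ha (0 + 1)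
    rw [hc, pow_one, ← Ideal.one_eq_top, Ideal.smul_eq_mul, mul_one, sub_eq_add_neg] at ha
    rw [← SModEq.sub_mem, ← add_zero a₀]
    refine ha.symm.trans (SModEq.rfl.add ?_)
    rw [SModEq.zero, Ideal.neg_mem_iff]
    exact Ideal.mul_mem_right _ _ h₁

lemma mem_span_X_pow_iff {n : ℕ} {x : PowerSeries ℝ} :
    x ∈ (Ideal.span {(PowerSeries.X : PowerSeries ℝ)}) ^ n ↔
      ∀ i < n, PowerSeries.coeff i x = 0 := by
  rw [Ideal.span_singleton_pow, Ideal.mem_span_singleton, PowerSeries.X_pow_dvd_iff]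

lemma smodeq_span_X_pow_iff {n : ℕ} {x y : PowerSeries ℝ} :
    x ≡ y [SMOD ((Ideal.span {(PowerSeries.X : PowerSeries ℝ)}) ^ n • ⊤ :
      Ideal (PowerSeries ℝ))] ↔ ∀ i < n, PowerSeries.coeff i x = PowerSeries.coeff i y := by
  rw [← Ideal.one_eq_top, Ideal.smul_eq_mul, mul_one, SModEq.sub_mem, mem_span_X_pow_iff]
  refine forall₂_congr fun i _ => ?_
  rw [map_sub, sub_eq_zero]

instance : IsAdicComplete (Ideal.span {(PowerSeries.X : PowerSeries ℝ)}) (PowerSeries ℝ) where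
  haus' := by
    intro x hx
    ext i
    have := smodeq_span_X_pow_iff.mp (hx (i + 1)) i (Nat.lt_succ_self i)
    simpa using this
  prec' := by
    intro f hf
    refine ⟨PowerSeries.mk fun i => PowerSeries.coeff i (f (i + 1)), fun n => ?_⟩
    rw [smodeq_span_X_pow_iff]
    intro i hi
    have := smodeq_span_X_pow_iff.mp (hf (show i + 1 ≤ n from hi)) i (Nat.lt_succ_self i)
    simp [PowerSeries.coeff_mk, ← this]

/-- Substitute the formal power series `y` for the (outer) variable `y` in a
two-variable polynomial `G(x,y)`, whose coefficients are polynomials in `x`,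
yielding the formal power series `G(x, y(x))`. -/
noncomputable def compose2 (G : Polynomial (Polynomial ℝ)) (y : PowerSeries ℝ) :
    PowerSeries ℝ :=
  Polynomial.eval₂ (Polynomial.coeToPowerSeries.ringHom) y G

/-- one-dimensional Tougeron implicit function theorem, formal version:
if `ȳ(x) = Σ_{i≤m} (c_i/i!) x^i` satisfies `G(x,ȳ(x)) = O(x^{2m+1})` and
`∂_y G(x,ȳ(x)) = x^m · s(x)` with `s(0) ≠ 0`, then a formal power series solution
`y` of `G(x,y(x)) = 0` exists with `y - ȳ = O(x^{m+1})`. -/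
theorem tougeron_one_dimensional_formal
    (G : Polynomial (Polynomial ℝ)) (m : ℕ) (hm : 1 ≤ m) (c : ℕ → ℝ)
    (ybar : PowerSeries ℝ)
    (hybar : ybar = PowerSeries.mk fun i => if i ≤ m then c i / (Nat.factorial i : ℝ) else 0)
    (happrox : ∀ j < 2 * m + 1, PowerSeries.coeff j (compose2 G ybar) = 0)
    (s : PowerSeries ℝ) (hs : PowerSeries.constantCoeff s ≠ 0)
    (hsep : compose2 G.derivative ybar = PowerSeries.X ^ m * s) :
    ∃ y : PowerSeries ℝ, compose2 G y = 0 ∧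
      ∀ j ≤ m, PowerSeries.coeff j y = PowerSeries.coeff j ybar := by
  classical
  set X : PowerSeries ℝ := PowerSeries.X with hX
  set φ : Polynomial ℝ →+* PowerSeries ℝ := Polynomial.coeToPowerSeries.ringHom with hφ
  have hcomp : ∀ (H : Polynomial (Polynomial ℝ)) (y : PowerSeries ℝ),
      compose2 H y = (H.map φ).eval y := fun H y => Polynomial.eval₂_eq_eval_map φ
  set T : Polynomial (PowerSeries ℝ) := Polynomial.taylor ybar (G.map φ) with hT
  have hT0 : T.coeff 0 = compose2 G ybar := by
    rw [hT, Polynomial.taylor_coeff_zero, hcomp]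
  have hT1 : T.coeff 1 = X ^ m * s := by
    rw [hT, Polynomial.taylor_coeff_one, Polynomial.derivative_map, ← hcomp, hsep]
  have hTeval : ∀ z, compose2 G (ybar + X ^ (m + 1) * z) = T.eval (X ^ (m + 1) * z) := by
    intro z
    rw [hcomp, hT, Polynomial.taylor_eval, add_comm]
  -- s is a unit
  have hsu : IsUnit s := by
    rw [PowerSeries.isUnit_iff_constantCoeff]
    exact isUnit_iff_ne_zero.mpr hs
  have hsne : s ≠ 0 := fun h => hs (by simp [h])
  -- the degree of T is at least 1
  have hd1 : 1 ≤ T.natDegree := by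
    apply Polynomial.le_natDegree_of_ne_zero
    rw [hT1]
    exact mul_ne_zero (pow_ne_zero _ PowerSeries.X_ne_zero) hsne
  set d : ℕ := T.natDegree with hd
  -- divide the constant coefficient by X^(2m+1)
  obtain ⟨g, hg⟩ : X ^ (2 * m + 1) ∣ T.coeff 0 := by
    rw [PowerSeries.X_pow_dvd_iff]
    intro j hj
    rw [hT0]
    exact happrox j hj
  set q : ℕ → PowerSeries ℝ := fun k =>
    if k = 0 then g else if k = 1 then s
    else X ^ ((m + 1) * k - (2 * m + 1)) * T.coeff k with hqdef
  have hq : ∀ k, X ^ (2 * m + 1) * q k = X ^ ((m + 1) * k) * T.coeff k := by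
    intro k
    match k with
    | 0 => simp [hqdef, ← hg]
    | 1 =>
      have h1 : q 1 = s := by simp [hqdef]
      rw [h1, hT1, ← mul_assoc, ← pow_add,
        show (m + 1) * 1 + m = 2 * m + 1 by ring]
    | (k + 2) =>
      simp only [hqdef, if_neg (Nat.succ_ne_zero _), if_neg (by omega : k + 2 ≠ 1)]
      rw [← mul_assoc, ← pow_add]
      congr 2
      have : 2 * m + 1 ≤ (m + 1) * (k + 2) := by nlinarith
      omega
  set F : Polynomial (PowerSeries ℝ) :=
    ∑ k ∈ Finset.range (d + 1), Polynomial.C (q k) * Polynomial.X ^ k with hF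
  have hFeval : ∀ z, X ^ (2 * m + 1) * F.eval z = T.eval (X ^ (m + 1) * z) := by
    intro z
    rw [hF, Polynomial.eval_finset_sum, Finset.mul_sum]
    conv_rhs => rw [Polynomial.eval_eq_sum_range]
    refine Finset.sum_congr rfl fun k _ => ?_
    rw [Polynomial.eval_mul, Polynomial.eval_C, Polynomial.eval_pow, Polynomial.eval_X,
      mul_pow, ← pow_mul, ← mul_assoc, hq k]
    ring
  -- the ideal
  set I : Ideal (PowerSeries ℝ) := Ideal.span {(PowerSeries.X : PowerSeries ℝ)} with hI
  have hImem : ∀ x : PowerSeries ℝ, x ∈ I ↔ PowerSeries.constantCoeff x = 0 := by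
    intro x
    rw [hI, Ideal.mem_span_singleton, PowerSeries.X_dvd_iff]
  have hqI : ∀ k, 2 ≤ k → q k ∈ I := by
    intro k hk
    have hk0 : k ≠ 0 := by omega
    have hk1 : k ≠ 1 := by omega
    rw [hI, Ideal.mem_span_singleton]
    simp only [hqdef, if_neg hk0, if_neg hk1]
    refine Dvd.dvd.mul_right ?_ _
    refine dvd_pow_self _ ?_
    have : 2 * m + 2 ≤ (m + 1) * k := by nlinarith
    omega
  -- the approximate root
  set u : (PowerSeries ℝ)ˣ := hsu.unit with hu
  have hus : (u : PowerSeries ℝ) = s := rfl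
  set a₀ : PowerSeries ℝ := -(g * (↑u⁻¹ : PowerSeries ℝ)) with ha₀
  have hsa₀ : s * a₀ = -g := by
    rw [ha₀, mul_neg, ← hus, ← mul_assoc, mul_comm (u : PowerSeries ℝ) g, mul_assoc,
      Units.mul_inv, mul_one]
  -- evaluation of F at a₀ lies in I
  have hsplit : ∀ (r : ℕ → PowerSeries ℝ),
      ∑ k ∈ Finset.range (d + 1), r k =
        (r 0 + r 1) + ∑ k ∈ Finset.Ico 2 (d + 1), r k := by
    intro r
    rw [← Finset.sum_range_add_sum_Ico _ (by omega : 2 ≤ d + 1)]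
    congr 1
    rw [Finset.sum_range_succ, Finset.sum_range_one]
  have hq0 : q 0 = g := by simp [hqdef]
  have hq1 : q 1 = s := by simp [hqdef]
  have hFevala₀ : F.eval a₀ = ∑ k ∈ Finset.range (d + 1), q k * a₀ ^ k := by
    rw [hF, Polynomial.eval_finset_sum]
    refine Finset.sum_congr rfl fun k _ => ?_
    rw [Polynomial.eval_mul, Polynomial.eval_C, Polynomial.eval_pow, Polynomial.eval_X]
  have hFa₀ : F.eval a₀ ∈ I := by
    rw [hFevala₀, hsplit]
    have h01 : q 0 * a₀ ^ 0 + q 1 * a₀ ^ 1 = 0 := by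
      rw [hq0, hq1, pow_zero, pow_one, mul_one, hsa₀]
      ring
    rw [h01, zero_add]
    refine Submodule.sum_mem _ fun k hk => ?_
    rw [Finset.mem_Ico] at hk
    exact Ideal.mul_mem_right _ _ (hqI k hk.1)
  -- derivative of F at a₀ is s modulo I
  have hF' : Polynomial.derivative F =
      ∑ k ∈ Finset.range (d + 1), Polynomial.C (q k * k) * Polynomial.X ^ (k - 1) := by
    rw [hF, Polynomial.derivative_sum]
    refine Finset.sum_congr rfl fun k _ => ?_
    rw [Polynomial.derivative_C_mul_X_pow]
  have hF'a₀ : (Polynomial.derivative F).eval a₀ - s ∈ I := by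
    have : (Polynomial.derivative F).eval a₀ =
        ∑ k ∈ Finset.range (d + 1), q k * k * a₀ ^ (k - 1) := by
      rw [hF', Polynomial.eval_finset_sum]
      refine Finset.sum_congr rfl fun k _ => ?_
      rw [Polynomial.eval_mul, Polynomial.eval_C, Polynomial.eval_pow, Polynomial.eval_X]
    rw [this, hsplit]
    have h01 : q 0 * (0 : ℕ) * a₀ ^ (0 - 1) + q 1 * (1 : ℕ) * a₀ ^ (1 - 1) = s := by
      rw [hq1]
      simp
    rw [h01, add_sub_cancel_left]
    refine Submodule.sum_mem _ fun k hk => ?_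
    rw [Finset.mem_Ico] at hk
    exact Ideal.mul_mem_right _ _ (Ideal.mul_mem_right _ _ (hqI k hk.1))
  have h₂ : IsUnit (Ideal.Quotient.mk I ((Polynomial.derivative F).eval a₀)) := by
    have : Ideal.Quotient.mk I ((Polynomial.derivative F).eval a₀) = Ideal.Quotient.mk I s := by
      rw [Ideal.Quotient.mk_eq_mk_iff_sub_mem]
      exact hF'a₀
    rw [this]
    exact hsu.map _
  obtain ⟨z, hz, -⟩ := newton_root_of_isAdicComplete I F a₀ hFa₀ h₂
  refine ⟨ybar + X ^ (m + 1) * z, ?_, ?_⟩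
  · rw [hTeval, ← hFeval, hz.eq_zero, mul_zero]
  · intro j hj
    have hzero : ∀ j < m + 1, PowerSeries.coeff j (X ^ (m + 1) * z) = 0 :=
      PowerSeries.X_pow_dvd_iff.mp (dvd_mul_right _ _)
    rw [map_add, hzero j (by omega), add_zero]
end

section
/- Let G(x, y) be analytic with G(0, c_0) = 0, and suppose c_0, …, c_m ∈ ℝ satisfy ∂_yG evaluated along derivatives up to order 2(m−1) vanishing (i.e., T^{2i}_{y}(c_i, …, c_0) = 0 for i = 0, …, m−1) while T^{2m}_y(c_m, …, c_0) ≠ 0, and the first 2m Taylor coefficients of G(x, Σ_{i≤m}(c_i/i!)x^i) vanish. Then for every l ≥ 0, the coefficient c_{m+1+l} is uniquely determined and a formal power series solution y(x) of G(x, y(x)) = 0 exists with y(x) = Σ_{i≤m}(c_i/i!)x^i + O(x^{m+1}). -/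
/-- The power series `y(x) = Σ_{i≥0} (c_i/i!) x^i`. -/
noncomputable def seriesOf (c : ℕ → ℝ) : PowerSeries ℝ :=
  PowerSeries.mk fun i => c i / (Nat.factorial i : ℝ)

/-- `T^j(c) = j!·coeff_j(G(x, y_c(x)))`, the `j`-th coefficient of the
system of undetermined coefficients. -/
noncomputable def Tcoef (G : Polynomial (Polynomial ℝ)) (c : ℕ → ℝ) (j : ℕ) : ℝ :=
  (Nat.factorial j : ℝ) * PowerSeries.coeff j (compose2 G (seriesOf c))

namespace Stmt15

/-- coeff j of evaluation depends only on coefficients ≤ j. -/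
lemma coeff_eval_congr (p : Polynomial (PowerSeries ℝ)) {y y' : PowerSeries ℝ} {j : ℕ}
    (h : ∀ r ≤ j, PowerSeries.coeff r y = PowerSeries.coeff r y') :
    PowerSeries.coeff j (p.eval y) = PowerSeries.coeff j (p.eval y') := by
  have hdvd : (PowerSeries.X : PowerSeries ℝ) ^ (j + 1) ∣ y - y' := by
    rw [PowerSeries.X_pow_dvd_iff]
    intro r hr
    simp [map_sub, h r (Nat.lt_succ_iff.mp hr)]
  have h2 : (PowerSeries.X : PowerSeries ℝ) ^ (j + 1) ∣ p.eval y - p.eval y' :=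
    dvd_trans hdvd (Polynomial.sub_dvd_eval_sub y y' p)
  have := (PowerSeries.X_pow_dvd_iff.mp h2) j (Nat.lt_succ_self j)
  rw [map_sub] at this
  linarith

/-- adding a tail of high order doesn't change low coefficients, provided the
derivative has vanishing low coefficients. -/
lemma eval_add_tail (p : Polynomial (PowerSeries ℝ)) (y z : PowerSeries ℝ) (j N : ℕ)
    (hz : ∀ q ≤ N, PowerSeries.coeff q z = 0) (hj : j ≤ 2 * N + 1)
    (hD : ∀ r, r + N + 1 ≤ j → PowerSeries.coeff r (p.derivative.eval y) = 0) :
    PowerSeries.coeff j (p.eval (y + z)) = PowerSeries.coeff j (p.eval y) := by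
  obtain ⟨k, hk⟩ := p.binomExpansion y z
  rw [hk, map_add, map_add]
  have h1 : PowerSeries.coeff j (p.derivative.eval y * z) = 0 := by
    rw [PowerSeries.coeff_mul]
    apply Finset.sum_eq_zero
    intro x hx
    rw [Finset.HasAntidiagonal.mem_antidiagonal] at hx
    by_cases hq : x.2 ≤ N
    · rw [hz x.2 hq, mul_zero]
    · rw [hD x.1 (by omega), zero_mul]
  have hzz : ∀ b ≤ j, PowerSeries.coeff b (z * z) = 0 := by
    intro b hb
    rw [PowerSeries.coeff_mul]
    apply Finset.sum_eq_zero
    intro x hx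
    rw [Finset.HasAntidiagonal.mem_antidiagonal] at hx
    by_cases hq : x.1 ≤ N
    · rw [hz x.1 hq, zero_mul]
    · rw [hz x.2 (by omega), mul_zero]
  have h2 : PowerSeries.coeff j (k * z ^ 2) = 0 := by
    rw [sq, PowerSeries.coeff_mul]
    apply Finset.sum_eq_zero
    intro x hx
    rw [Finset.HasAntidiagonal.mem_antidiagonal] at hx
    rw [hzz x.2 (by omega), mul_zero]
  rw [h1, h2, add_zero, add_zero]

/-- single-coefficient affine step. -/
lemma eval_add_single (p : Polynomial (PowerSeries ℝ)) (y : PowerSeries ℝ) (a : ℝ)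
    (k j : ℕ) (hjk : j < 2 * k) :
    PowerSeries.coeff j (p.eval (y + PowerSeries.C a * PowerSeries.X ^ k))
      = PowerSeries.coeff j (p.eval y)
        + a * PowerSeries.coeff j (p.derivative.eval y * PowerSeries.X ^ k) := by
  obtain ⟨κ, hκ⟩ := p.binomExpansion y (PowerSeries.C a * PowerSeries.X ^ k)
  rw [hκ, map_add, map_add]
  have h2 : PowerSeries.coeff j (κ * (PowerSeries.C a * PowerSeries.X ^ k) ^ 2) = 0 := by
    have : (PowerSeries.X : PowerSeries ℝ) ^ (2 * k)
        ∣ κ * (PowerSeries.C a * PowerSeries.X ^ k) ^ 2 :=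
      ⟨κ * PowerSeries.C a ^ 2, by ring⟩
    exact (PowerSeries.X_pow_dvd_iff.mp this) j hjk
  have h1 : PowerSeries.coeff j
        (p.derivative.eval y * (PowerSeries.C a * PowerSeries.X ^ k))
      = a * PowerSeries.coeff j (p.derivative.eval y * PowerSeries.X ^ k) := by
    rw [show p.derivative.eval y * (PowerSeries.C a * PowerSeries.X ^ k)
        = PowerSeries.C a * (p.derivative.eval y * PowerSeries.X ^ k) by ring,
      PowerSeries.coeff_C_mul]
  rw [h1, h2, add_zero]

lemma hasDerivAt_coeff_eval (y : PowerSeries ℝ) (i : ℕ) (s₀ : ℝ) (p : Polynomial (PowerSeries ℝ)) :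
    ∀ j, HasDerivAt
      (fun s : ℝ => PowerSeries.coeff j (p.eval (y + PowerSeries.C s * PowerSeries.X ^ i)))
      (PowerSeries.coeff j
        (p.derivative.eval (y + PowerSeries.C s₀ * PowerSeries.X ^ i) * PowerSeries.X ^ i))
      s₀ := by
  set ℓ : ℝ → PowerSeries ℝ := fun s => y + PowerSeries.C s * PowerSeries.X ^ i with hℓ
  have key : ∀ u : Polynomial (PowerSeries ℝ),
      (∀ j, HasDerivAt (fun s : ℝ => PowerSeries.coeff j (u.eval (ℓ s)))
        (PowerSeries.coeff j (u.derivative.eval (ℓ s₀) * PowerSeries.X ^ i)) s₀) →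
      (∀ j, HasDerivAt (fun s : ℝ => PowerSeries.coeff j ((u * Polynomial.X).eval (ℓ s)))
        (PowerSeries.coeff j ((u * Polynomial.X).derivative.eval (ℓ s₀) * PowerSeries.X ^ i))
        s₀) := by
    intro u hu j
    have hfun : (fun s : ℝ => PowerSeries.coeff j ((u * Polynomial.X).eval (ℓ s)))
        = fun s : ℝ => ∑ x ∈ Finset.HasAntidiagonal.antidiagonal j,
            (PowerSeries.coeff x.1 (u.eval (ℓ s))) * (PowerSeries.coeff x.2 (ℓ s)) := by
      funext s
      rw [Polynomial.eval_mul, Polynomial.eval_X, PowerSeries.coeff_mul]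
    rw [hfun]
    have hcoeffℓ : ∀ q : ℕ, HasDerivAt (fun s : ℝ => PowerSeries.coeff q (ℓ s))
        (PowerSeries.coeff q ((PowerSeries.X : PowerSeries ℝ) ^ i)) s₀ := by
      intro q
      have : (fun s : ℝ => PowerSeries.coeff q (ℓ s))
          = fun s : ℝ => PowerSeries.coeff q y
              + s * PowerSeries.coeff q ((PowerSeries.X : PowerSeries ℝ) ^ i) := by
        funext s
        simp [hℓ, PowerSeries.coeff_C_mul]
      rw [this]
      simpa using ((hasDerivAt_id s₀).mul_const
        (PowerSeries.coeff q ((PowerSeries.X : PowerSeries ℝ) ^ i))).const_add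
        (PowerSeries.coeff q y)
    have hterms := fun (x : ℕ × ℕ) (_ : x ∈ Finset.HasAntidiagonal.antidiagonal j) =>
      (hu x.1).mul (hcoeffℓ x.2)
    have hsum := HasDerivAt.sum hterms
    convert hsum using 1
    case e'_4 => rfl
    case e'_5 => rfl
    case e'_8 => funext s; simp [Finset.sum_apply]
    rw [Polynomial.derivative_mul, Polynomial.derivative_X, mul_one,
      Polynomial.eval_add, Polynomial.eval_mul, Polynomial.eval_X]
    rw [add_mul, map_add]
    rw [show u.derivative.eval (ℓ s₀) * ℓ s₀ * PowerSeries.X ^ i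
        = (u.derivative.eval (ℓ s₀) * PowerSeries.X ^ i) * ℓ s₀ by ring]
    rw [PowerSeries.coeff_mul, PowerSeries.coeff_mul, ← Finset.sum_add_distrib]
  induction p using Polynomial.induction_on with
  | C a =>
    intro j
    have : (fun s : ℝ => PowerSeries.coeff j ((Polynomial.C a).eval (ℓ s)))
        = fun _ : ℝ => PowerSeries.coeff j a := by
      funext s; rw [Polynomial.eval_C]
    rw [this]
    simpa using hasDerivAt_const s₀ (PowerSeries.coeff j a)
  | add p q hp hq =>
    intro j
    have : (fun s : ℝ => PowerSeries.coeff j ((p + q).eval (ℓ s)))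
        = fun s : ℝ => PowerSeries.coeff j (p.eval (ℓ s))
            + PowerSeries.coeff j (q.eval (ℓ s)) := by
      funext s; rw [Polynomial.eval_add, map_add]
    rw [this, Polynomial.derivative_add, Polynomial.eval_add, add_mul, map_add]
    exact (hp j).add (hq j)
  | monomial n a h =>
    have : Polynomial.C a * Polynomial.X ^ (n + 1)
        = (Polynomial.C a * Polynomial.X ^ n) * Polynomial.X := by
      rw [pow_succ, mul_assoc]
    rw [this]
    exact key _ h

lemma compose2_eq_eval (G : Polynomial (Polynomial ℝ)) (y : PowerSeries ℝ) :
    compose2 G y = (G.map (Polynomial.coeToPowerSeries.ringHom)).eval y := by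
  rw [compose2, Polynomial.eval₂_eq_eval_map]

lemma seriesOf_update (c : ℕ → ℝ) (i : ℕ) (t : ℝ) :
    seriesOf (Function.update c i t)
      = seriesOf c + PowerSeries.C ((t - c i) / (Nat.factorial i : ℝ)) * PowerSeries.X ^ i := by
  ext j
  simp only [seriesOf, PowerSeries.coeff_mk, map_add, PowerSeries.coeff_C_mul,
    PowerSeries.coeff_X_pow, Function.update]
  by_cases h : j = i
  · subst h; simp; ring
  · simp [h]

lemma deriv_Tcoef (G : Polynomial (Polynomial ℝ)) (c : ℕ → ℝ) (i : ℕ) :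
    deriv (fun t => Tcoef G (Function.update c i t) (2 * i)) (c i)
      = (Nat.factorial (2 * i) : ℝ) / (Nat.factorial i : ℝ)
        * PowerSeries.coeff i
            ((G.map (Polynomial.coeToPowerSeries.ringHom)).derivative.eval (seriesOf c)) := by
  set p := G.map (Polynomial.coeToPowerSeries.ringHom)
  set y₀ := seriesOf c
  have hg := hasDerivAt_coeff_eval y₀ i 0 p (2 * i)
  have hφ : HasDerivAt (fun t : ℝ => (t - c i) / (Nat.factorial i : ℝ))
      (1 / (Nat.factorial i : ℝ)) (c i) := by
    simpa using ((hasDerivAt_id (c i)).sub_const (c i)).div_const (Nat.factorial i : ℝ)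
  have hφ0 : (c i - c i) / (Nat.factorial i : ℝ) = 0 := by simp
  have hcomp := HasDerivAt.comp (c i) (hφ0 ▸ hg) hφ
  have hfun : (fun t => Tcoef G (Function.update c i t) (2 * i))
      = fun t => (Nat.factorial (2 * i) : ℝ)
          * ((fun s : ℝ => PowerSeries.coeff (2 * i)
              (p.eval (y₀ + PowerSeries.C s * PowerSeries.X ^ i)))
            ∘ (fun t : ℝ => (t - c i) / (Nat.factorial i : ℝ))) t := by
    funext t
    simp only [Tcoef, compose2_eq_eval, seriesOf_update, Function.comp]
    rfl
  rw [hfun, deriv_const_mul _ hcomp.differentiableAt, hcomp.deriv]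
  have hsimp : PowerSeries.coeff (2 * i)
      (p.derivative.eval (y₀ + PowerSeries.C 0 * PowerSeries.X ^ i) * PowerSeries.X ^ i)
      = PowerSeries.coeff i (p.derivative.eval y₀) := by
    rw [map_zero, zero_mul, add_zero, show 2 * i = i + i by ring, PowerSeries.coeff_mul_X_pow]
  rw [hφ0, hsimp]
  ring

noncomputable def solAux (p : Polynomial (PowerSeries ℝ)) (m : ℕ) (c : ℕ → ℝ) (s : ℝ) :
    ℕ → ℝ
  | k =>
    if k ≤ m then c k
    else
      -((Nat.factorial k : ℝ) * PowerSeries.coeff (m + k)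
          (Polynomial.eval (PowerSeries.mk fun i =>
            if _ : i < k then solAux p m c s i / (Nat.factorial i : ℝ) else 0) p)) / s
  termination_by k => k

lemma solAux_le (p : Polynomial (PowerSeries ℝ)) (m : ℕ) (c : ℕ → ℝ) (s : ℝ) (k : ℕ)
    (hk : k ≤ m) : solAux p m c s k = c k := by
  rw [solAux]; simp [hk]

lemma solAux_gt (p : Polynomial (PowerSeries ℝ)) (m : ℕ) (c : ℕ → ℝ) (s : ℝ) (k : ℕ)
    (hk : ¬ k ≤ m) :
    solAux p m c s k = -((Nat.factorial k : ℝ) * PowerSeries.coeff (m + k)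
        (Polynomial.eval (PowerSeries.mk fun i =>
          if i < k then solAux p m c s i / (Nat.factorial i : ℝ) else 0) p)) / s := by
  rw [solAux]
  simp only [hk, if_false]
  congr 2

end Stmt15

/-- scalar algebraic case `n = 0` of Theorem 1: if the partial
derivatives `T^{2i}_{c_i}` vanish for `i = 0,…,m−1` while `T^{2m}_{c_m} ≠ 0`, and
the first `2m` Taylor coefficients of `G(x, Σ_{i≤m}(c_i/i!)x^i)` vanish, then
all higher coefficients are uniquely determined and a formal power series solution
of `G(x,y(x)) = 0` agreeing with `Σ_{i≤m}(c_i/i!)x^i` up to order `m` exists. -/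
theorem scalar_algebraic_case_unique_solution
    (G : Polynomial (Polynomial ℝ)) (m : ℕ) (hm : 1 ≤ m) (c : ℕ → ℝ)
    (ctrunc : ℕ → ℝ) (hctrunc : ctrunc = fun i => if i ≤ m then c i else 0)
    (hG0 : Polynomial.eval₂ (Polynomial.evalRingHom 0) (c 0) G = 0)
    (hvanish : ∀ i < m,
      deriv (fun t => Tcoef G (Function.update ctrunc i t) (2 * i)) (ctrunc i) = 0)
    (hsep : deriv (fun t => Tcoef G (Function.update ctrunc m t) (2 * m)) (ctrunc m) ≠ 0)
    (happrox : ∀ j ≤ 2 * m, PowerSeries.coeff j (compose2 G (seriesOf ctrunc)) = 0) :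
    ∃! c' : ℕ → ℝ, (∀ i ≤ m, c' i = c i) ∧ compose2 G (seriesOf c') = 0 := by
  classical
  set p : Polynomial (PowerSeries ℝ) := G.map (Polynomial.coeToPowerSeries.ringHom) with hp
  set y₀ : PowerSeries ℝ := seriesOf ctrunc with hy₀
  set s₀ : ℝ := PowerSeries.coeff m (p.derivative.eval y₀) with hs₀def
  have hfacne : ∀ n : ℕ, (Nat.factorial n : ℝ) ≠ 0 := fun n =>
    Nat.cast_ne_zero.mpr (Nat.factorial_ne_zero n)
  -- vanishing of low coefficients of the separant
  have hDlow : ∀ i < m, PowerSeries.coeff i (p.derivative.eval y₀) = 0 := by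
    intro i hi
    have h1 := Stmt15.deriv_Tcoef G ctrunc i
    rw [hvanish i hi] at h1
    have h2 : (Nat.factorial (2 * i) : ℝ) / (Nat.factorial i : ℝ) ≠ 0 :=
      div_ne_zero (hfacne _) (hfacne _)
    have := (mul_eq_zero.mp h1.symm).resolve_left h2
    exact this
  have hs₀ : s₀ ≠ 0 := by
    intro h0
    apply hsep
    have h1 := Stmt15.deriv_Tcoef G ctrunc m
    rw [show 2 * m = 2 * m by rfl] at h1
    rw [h1, ← hs₀def, h0, mul_zero]
  -- agreement of low coefficients of any relevant series with y₀
  have hy₀coeff : ∀ r ≤ m, PowerSeries.coeff r y₀ = c r / (Nat.factorial r : ℝ) := by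
    intro r hr
    rw [hy₀, seriesOf, PowerSeries.coeff_mk, hctrunc]
    simp [hr]
  have hDlow' : ∀ (y : PowerSeries ℝ),
      (∀ r ≤ m, PowerSeries.coeff r y = c r / (Nat.factorial r : ℝ)) →
      (∀ r < m, PowerSeries.coeff r (p.derivative.eval y) = 0)
        ∧ PowerSeries.coeff m (p.derivative.eval y) = s₀ := by
    intro y hy
    have hcongr : ∀ j ≤ m, PowerSeries.coeff j (p.derivative.eval y)
        = PowerSeries.coeff j (p.derivative.eval y₀) := by
      intro j hj
      exact Stmt15.coeff_eval_congr p.derivative fun r hr => by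
        rw [hy r (le_trans hr hj), hy₀coeff r (le_trans hr hj)]
    constructor
    · intro r hr
      rw [hcongr r (le_of_lt hr)]
      exact hDlow r hr
    · rw [hcongr m le_rfl]
  -- the truncation series
  let trunc : (ℕ → ℝ) → ℕ → PowerSeries ℝ := fun d k =>
    PowerSeries.mk fun i => if i < k then d i / (Nat.factorial i : ℝ) else 0
  have htrunclow : ∀ (d : ℕ → ℝ), (∀ i ≤ m, d i = c i) → ∀ k, m < k →
      ∀ r ≤ m, PowerSeries.coeff r (trunc d k) = c r / (Nat.factorial r : ℝ) := by
    intro d hd k hk r hr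
    simp only [trunc, PowerSeries.coeff_mk, if_pos (lt_of_le_of_lt hr hk)]
    rw [hd r hr]
  have hserlow : ∀ (d : ℕ → ℝ), (∀ i ≤ m, d i = c i) →
      ∀ r ≤ m, PowerSeries.coeff r (seriesOf d) = c r / (Nat.factorial r : ℝ) := by
    intro d hd r hr
    rw [seriesOf, PowerSeries.coeff_mk, hd r hr]
  -- key identity for high coefficients
  have key : ∀ (d : ℕ → ℝ), (∀ i ≤ m, d i = c i) → ∀ k, m < k →
      PowerSeries.coeff (m + k) (p.eval (seriesOf d))
        = PowerSeries.coeff (m + k) (p.eval (trunc d k))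
          + d k / (Nat.factorial k : ℝ) * s₀ := by
    intro d hd k hk
    -- step 1: replace seriesOf d by trunc d (k+1)
    have hstep1 : PowerSeries.coeff (m + k) (p.eval (seriesOf d))
        = PowerSeries.coeff (m + k) (p.eval (trunc d (k + 1))) := by
      have h := Stmt15.eval_add_tail p (trunc d (k + 1)) (seriesOf d - trunc d (k + 1))
        (m + k) k
        (by
          intro q hq
          simp only [map_sub, trunc, PowerSeries.coeff_mk, seriesOf,
            if_pos (Nat.lt_succ_of_le hq)]
          ring)
        (by omega)
        (by
          intro r hr
          exact ((hDlow' (trunc d (k + 1))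
            (htrunclow d hd (k + 1) (by omega))).1) r (by omega))
      rw [add_sub_cancel] at h
      exact h
    -- step 2: single-coefficient step from trunc d k to trunc d (k+1)
    have hsplit : trunc d (k + 1) = trunc d k
        + PowerSeries.C (d k / (Nat.factorial k : ℝ)) * PowerSeries.X ^ k := by
      ext j
      simp only [trunc, map_add, PowerSeries.coeff_mk, PowerSeries.coeff_C_mul,
        PowerSeries.coeff_X_pow]
      by_cases hj : j = k
      · subst hj; simp
      · by_cases hj2 : j < k
        · simp [hj, hj2, Nat.lt_succ_of_lt hj2]
        · have : ¬ j < k + 1 := by omega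
          simp [hj, hj2, this]
    have hstep2 := Stmt15.eval_add_single p (trunc d k) (d k / (Nat.factorial k : ℝ))
      k (m + k) (by omega)
    have hsep2 : PowerSeries.coeff (m + k) (p.derivative.eval (trunc d k) * PowerSeries.X ^ k)
        = s₀ := by
      rw [PowerSeries.coeff_mul_X_pow]
      exact (hDlow' (trunc d k) (by
        intro r hr
        simp only [trunc, PowerSeries.coeff_mk, if_pos (lt_of_le_of_lt hr hk)]
        rw [hd r hr])).2
    rw [hstep1, hsplit, hstep2, hsep2]
  -- low coefficients vanish automatically
  have low : ∀ (d : ℕ → ℝ), (∀ i ≤ m, d i = c i) → ∀ j ≤ 2 * m,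
      PowerSeries.coeff j (p.eval (seriesOf d)) = 0 := by
    intro d hd j hj
    have h := Stmt15.eval_add_tail p y₀ (seriesOf d - y₀) j m
      (by
        intro q hq
        rw [map_sub, hserlow d hd q hq, hy₀coeff q hq, sub_self])
      (by omega)
      (by
        intro r hr
        exact hDlow r (by omega))
    rw [add_sub_cancel] at h
    rw [h]
    have := happrox j hj
    rwa [Stmt15.compose2_eq_eval, ← hp] at this
  -- characterization of solutions
  have charac : ∀ (d : ℕ → ℝ), (∀ i ≤ m, d i = c i) →
      (compose2 G (seriesOf d) = 0 ↔ ∀ k, m < k →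
        PowerSeries.coeff (m + k) (p.eval (trunc d k))
          + d k / (Nat.factorial k : ℝ) * s₀ = 0) := by
    intro d hd
    rw [Stmt15.compose2_eq_eval, ← hp]
    constructor
    · intro hsol k hk
      rw [← key d hd k hk, hsol, map_zero]
    · intro hk
      ext j
      rw [map_zero]
      by_cases hj : j ≤ 2 * m
      · exact low d hd j hj
      · have hjk : j = m + (j - m) := by omega
        rw [hjk, key d hd (j - m) (by omega)]
        exact hk (j - m) (by omega)
  -- the solution
  set c' : ℕ → ℝ := Stmt15.solAux p m c s₀ with hc'
  have hc'agree : ∀ i ≤ m, c' i = c i := fun i hi => Stmt15.solAux_le p m c s₀ i hi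
  have hc'sol : compose2 G (seriesOf c') = 0 := by
    rw [charac c' hc'agree]
    intro k hk
    have := Stmt15.solAux_gt p m c s₀ k (by omega)
    rw [← hc'] at this
    have htr : (PowerSeries.mk fun i =>
        if i < k then Stmt15.solAux p m c s₀ i / (Nat.factorial i : ℝ) else 0) = trunc c' k := by
      rfl
    rw [htr] at this
    rw [this]
    field_simp
    ring
  refine ⟨c', ⟨hc'agree, hc'sol⟩, ?_⟩
  intro d ⟨hdagree, hdsol⟩
  have huniq : ∀ k, d k = c' k := by
    intro k
    induction k using Nat.strong_induction_on with
    | _ k IH =>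
      by_cases hk : k ≤ m
      · rw [hdagree k hk, ← hc'agree k hk]
      · have hk' : m < k := by omega
        have heq := (charac d hdagree).mp hdsol k hk'
        have htr : trunc d k = trunc c' k := by
          ext j
          simp only [trunc, PowerSeries.coeff_mk]
          by_cases hj : j < k
          · rw [if_pos hj, if_pos hj, IH j hj]
          · rw [if_neg hj, if_neg hj]
        rw [htr] at heq
        have heq' := (charac c' hc'agree).mp hc'sol k hk'
        have hmul : d k / (Nat.factorial k : ℝ) * s₀
            = c' k / (Nat.factorial k : ℝ) * s₀ := by linarith
        have := mul_right_cancel₀ hs₀ hmul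
        field_simp at this
        exact this
  exact funext huniq
end
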